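/- Let X = Y = [0,1) pointed at 0. The smash product X ∧ Y is not first countable at its basepoint: there is no countable family of neighbourhoods of the basepoint that is a local basis. Consequently X ∧ Y cannot be embedded into any first-countable space; in particular [0,1) ∧ [0,1] does not embed into [0,1] ∧ [0,1], so the functor − ∧ [0,1] does not preserve subspace embeddings. -/

import Mathlib

open Topology

section SmashDefs

variable {X Y : Type*} [TopologicalSpace X] [TopologicalSpace Y]

/-- The relation on `X × Y` collapsing the wedge `X × {y₀} ∪ {x₀} × Y` to a point. -/
def smashRel (x₀ : X) (y₀ : Y) : X × Y → X × Y → Prop :=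
  fun p q => p = q ∨ ((p.1 = x₀ ∨ p.2 = y₀) ∧ (q.1 = x₀ ∨ q.2 = y₀))

/-- The smash product `X ∧ Y` of pointed spaces, as the quotient `(X × Y)/(X ∨ Y)`
collapsing the wedge to a point, with the quotient topology. -/
def Smash (x₀ : X) (y₀ : Y) : Type _ := Quot (smashRel x₀ y₀)

instance (x₀ : X) (y₀ : Y) : TopologicalSpace (Smash x₀ y₀) :=
  inferInstanceAs (TopologicalSpace (Quot _))

/-- Canonical projection `η : X × Y → X ∧ Y`. -/
def Smash.mk (x₀ : X) (y₀ : Y) (p : X × Y) : Smash x₀ y₀ := Quot.mk _ p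

/-- Basepoint of the smash product. -/
def Smash.pt (x₀ : X) (y₀ : Y) : Smash x₀ y₀ := Smash.mk x₀ y₀ (x₀, y₀)

end SmashDefs

/-- `[0,1)` pointed at `0`. -/
def Ico01pt : Set.Ico (0:ℝ) 1 := ⟨0, by constructor <;> norm_num⟩

/-- `[0,1]` pointed at `0`. -/
def Icc01pt : Set.Icc (0:ℝ) 1 := ⟨0, by constructor <;> norm_num⟩

/-!
The wedge `X ∨ Y` is a single point of `X ∧ Y`, so a neighbourhood of the basepoint is the
image of an open set containing the whole wedge. Given countably many neighbourhoods `sₙ` of the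
basepoint of `[0,1) ∧ Y`, pick `aₙ → 1` in `[0,1)` and, as `y₀` is not isolated, `bₙ ≠ y₀` with
`η (aₙ, bₙ) ∈ sₙ`. Since `aₙ` leaves every compact part of `[0,1)`, the points `(aₙ, bₙ)` form a
closed set missing the wedge; the image of its complement is a neighbourhood of the basepoint
containing no `sₙ`.

For compact metric `X, Y` the projection `η` is closed with compact fibres, so the neighbourhood
filter of `η p` is the image of the neighbourhood filter of a compact fibre, which is countably
generated by thickenings. Hence `[0,1] ∧ [0,1]` is first countable, and an embedding would pull
this back to `[0,1) ∧ [0,1]`.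
-/

open Topology Filter Set Function

theorem IsCompact.isCountablyGenerated_nhdsSet {E : Type*} [PseudoMetricSpace E] {K : Set E}
    (hK : IsCompact K) : (𝓝ˢ K).IsCountablyGenerated :=
  ((Metric.hasBasis_nhdsSet_thickening hK).to_hasBasis
    (fun _ hδ => let ⟨n, hn⟩ := exists_nat_one_div_lt hδ
      ⟨n, trivial, Metric.thickening_mono hn.le K⟩)
    fun n _ => ⟨1 / (n + 1), Nat.one_div_pos_of_nat, subset_rfl⟩).isCountablyGenerated

theorem IsClosedMap.isCountablyGenerated_nhds {E B : Type*} [PseudoMetricSpace E]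
    [TopologicalSpace B] {f : E → B} (hf : IsClosedMap f) (hfc : Continuous f)
    (hfs : Surjective f) {b : B} (hb : IsCompact (f ⁻¹' {b})) : (𝓝 b).IsCountablyGenerated := by
  rw [← map_comap_of_surjective hfs (𝓝 b), hf.comap_nhds_eq hfc]
  have := hb.isCountablyGenerated_nhdsSet
  infer_instance

theorem locallyFinite_singleton_of_tendsto {X Y : Type*} [TopologicalSpace X] [TopologicalSpace Y]
    [T2Space Y] {g : X → Y} (hg : Continuous g) {a : ℕ → X} {L : Y} (hL : L ∉ range g)
    (ha : Tendsto (g ∘ a) atTop (𝓝 L)) : LocallyFinite fun n => ({a n} : Set X) := by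
  intro x
  obtain ⟨U, V, hU, hV, hUV⟩ := t2_separation_nhds (fun h : g x = L => hL ⟨x, h⟩)
  refine ⟨g ⁻¹' U, hg.continuousAt hU, ?_⟩
  have : ∀ᶠ n in cofinite, a n ∉ g ⁻¹' U := by
    rw [Nat.cofinite_eq_atTop]
    exact (ha.eventually (eventually_mem_set.2 hV)).mono fun n hn hnU =>
      hUV.notMem_of_mem_left hnU hn
  simpa only [singleton_inter_nonempty, eventually_cofinite, not_not] using this

namespace Smash

variable {X Y : Type*} {x₀ : X} {y₀ : Y}

def wedge (x₀ : X) (y₀ : Y) : Set (X × Y) := {p | p.1 = x₀ ∨ p.2 = y₀}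

theorem mk_eq_mk_iff {p q : X × Y} :
    mk x₀ y₀ p = mk x₀ y₀ q ↔ p = q ∨ p ∈ wedge x₀ y₀ ∧ q ∈ wedge x₀ y₀ := by
  have hequiv : Equivalence (smashRel x₀ y₀) :=
    ⟨fun _ => Or.inl rfl,
      fun h => h.imp Eq.symm And.symm,
      fun hpq hqr => by
        rcases hpq with rfl | ⟨hp, hq⟩
        · exact hqr
        · rcases hqr with rfl | ⟨-, hr⟩
          exacts [Or.inr ⟨hp, hq⟩, Or.inr ⟨hp, hr⟩]⟩
  exact Quot.eq.trans hequiv.eqvGen_iff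

theorem mk_eq_pt_iff {p : X × Y} : mk x₀ y₀ p = pt x₀ y₀ ↔ p ∈ wedge x₀ y₀ := by
  rw [pt, mk_eq_mk_iff]
  constructor
  · rintro (rfl | ⟨hp, -⟩)
    exacts [Or.inl rfl, hp]
  · exact fun hp => Or.inr ⟨hp, Or.inl rfl⟩

theorem preimage_image_mk_of_disjoint {s : Set (X × Y)} (hs : Disjoint s (wedge x₀ y₀)) :
    mk x₀ y₀ ⁻¹' (mk x₀ y₀ '' s) = s := by
  refine Subset.antisymm ?_ (subset_preimage_image _ _)
  rintro q ⟨p, hp, hpq⟩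
  rcases mk_eq_mk_iff.1 hpq with rfl | ⟨hpw, -⟩
  exacts [hp, absurd hpw (hs.notMem_of_mem_left hp)]

theorem preimage_image_mk_of_nonempty {s : Set (X × Y)} (hs : (s ∩ wedge x₀ y₀).Nonempty) :
    mk x₀ y₀ ⁻¹' (mk x₀ y₀ '' s) = s ∪ wedge x₀ y₀ := by
  obtain ⟨w, hws, hww⟩ := hs
  ext q
  constructor
  · rintro ⟨p, hp, hpq⟩
    rcases mk_eq_mk_iff.1 hpq with rfl | ⟨-, hq⟩
    exacts [Or.inl hp, Or.inr hq]
  · rintro (hq | hq)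
    exacts [⟨q, hq, rfl⟩, ⟨w, hws, mk_eq_mk_iff.2 (Or.inr ⟨hww, hq⟩)⟩]

section Topology

variable [TopologicalSpace X] [TopologicalSpace Y]

theorem isClosed_wedge [T1Space X] [T1Space Y] : IsClosed (wedge x₀ y₀) :=
  (isClosed_singleton.preimage continuous_fst).union (isClosed_singleton.preimage continuous_snd)

theorem isQuotientMap_mk : IsQuotientMap (mk x₀ y₀) := isQuotientMap_quot_mk

theorem continuous_mk : Continuous (mk x₀ y₀) := isQuotientMap_mk.continuous

theorem isOpen_image_mk {s : Set (X × Y)} (hs : IsOpen s) (hws : wedge x₀ y₀ ⊆ s) :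
    IsOpen (mk x₀ y₀ '' s) := by
  have hpt : (x₀, y₀) ∈ s ∩ wedge x₀ y₀ := ⟨hws (Or.inl rfl), Or.inl rfl⟩
  rw [← isQuotientMap_mk.isOpen_preimage, preimage_image_mk_of_nonempty ⟨_, hpt⟩,
    union_eq_left.2 hws]
  exact hs

theorem isClosedMap_mk [T1Space X] [T1Space Y] : IsClosedMap (mk x₀ y₀) := by
  intro s hs
  rw [← isQuotientMap_mk.isClosed_preimage]
  rcases (s ∩ wedge x₀ y₀).eq_empty_or_nonempty with h | h
  · rw [preimage_image_mk_of_disjoint (disjoint_iff_inter_eq_empty.2 h)]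
    exact hs
  · rw [preimage_image_mk_of_nonempty h]
    exact hs.union isClosed_wedge

theorem exists_ne_mk_mem_of_mem_nhds_pt [(𝓝[≠] y₀).NeBot] {s : Set (Smash x₀ y₀)}
    (hs : s ∈ 𝓝 (pt x₀ y₀)) (x : X) : ∃ y ≠ y₀, mk x₀ y₀ (x, y) ∈ s := by
  have hsx : s ∈ 𝓝 (mk x₀ y₀ (x, y₀)) :=
    (mk_eq_pt_iff (p := (x, y₀)).2 (Or.inr rfl)).symm ▸ hs
  have hev : ∀ᶠ y in 𝓝 y₀, mk x₀ y₀ (x, y) ∈ s :=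
    (continuous_mk.comp (Continuous.prodMk_right x)).continuousAt.preimage_mem_nhds hsx
  obtain ⟨y, hys, hy⟩ :=
    ((hev.filter_mono nhdsWithin_le_nhds).and (self_mem_nhdsWithin (s := {y₀}ᶜ))).exists
  exact ⟨y, hy, hys⟩

theorem not_isCountablyGenerated_nhds_pt [T1Space X] [T1Space Y] [(𝓝[≠] y₀).NeBot]
    {a : ℕ → X} (hax : ∀ n, a n ≠ x₀) (ha : LocallyFinite fun n => ({a n} : Set X)) :
    ¬ (𝓝 (pt x₀ y₀)).IsCountablyGenerated := by
  intro _
  obtain ⟨s, hs⟩ := (𝓝 (pt x₀ y₀)).exists_antitone_basis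
  choose b hby₀ hbs using fun n => exists_ne_mk_mem_of_mem_nhds_pt (hs.mem n) (a n)
  set W : Set (X × Y) := (⋃ n, {a n} ×ˢ {b n})ᶜ
  have hW : IsOpen W := isOpen_compl_iff.2 <|
    (ha.prod_right fun n => {b n}).isClosed_iUnion fun _ =>
      isClosed_singleton.prod isClosed_singleton
  have hwW : wedge x₀ y₀ ⊆ W := by
    rintro q hq hqU
    obtain ⟨n, hq₁, hq₂⟩ := mem_iUnion.1 hqU
    exact hq.elim (fun h => hax n (hq₁.symm.trans h)) fun h => hby₀ n (hq₂.symm.trans h)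
  obtain ⟨n, hn⟩ := hs.mem_iff.1 <|
    (isOpen_image_mk hW hwW).mem_nhds ⟨(x₀, y₀), hwW (Or.inl rfl), rfl⟩
  obtain ⟨q, hqW, hq⟩ := hn (hbs n)
  rcases mk_eq_mk_iff.1 hq with rfl | ⟨-, h⟩
  · exact hqW (mem_iUnion.2 ⟨n, rfl, rfl⟩)
  · exact hwW h (mem_iUnion.2 ⟨n, rfl, rfl⟩)

end Topology

instance firstCountableTopology {X Y : Type*} [MetricSpace X] [MetricSpace Y]
    [CompactSpace X] [CompactSpace Y] (x₀ : X) (y₀ : Y) :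
    FirstCountableTopology (Smash x₀ y₀) := by
  refine ⟨fun z => ?_⟩
  obtain ⟨p, rfl⟩ := isQuotientMap_mk.surjective z
  refine isClosedMap_mk.isCountablyGenerated_nhds continuous_mk
    isQuotientMap_mk.surjective (IsClosed.isCompact ?_)
  rw [← image_singleton]
  exact (isClosedMap_mk _ isClosed_singleton).preimage continuous_mk

end Smash

theorem exists_locallyFinite_singleton_seq_Ico :
    ∃ a : ℕ → Set.Ico (0:ℝ) 1, (∀ n, a n ≠ Ico01pt) ∧ LocallyFinite fun n => ({a n} : Set _) := by
  have hr : ∀ n : ℕ, 0 < (2:ℝ)⁻¹ ^ (n + 1) ∧ (2:ℝ)⁻¹ ^ (n + 1) < 1 := fun n =>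
    ⟨by positivity, pow_lt_one₀ (by norm_num) (by norm_num) n.succ_ne_zero⟩
  refine ⟨fun n => ⟨1 - 2⁻¹ ^ (n + 1), by linarith [hr n], by linarith [hr n]⟩, fun n h => ?_,
    locallyFinite_singleton_of_tendsto continuous_subtype_val (L := 1)
      (fun ⟨x, hx⟩ => x.2.2.ne hx) ?_⟩
  · have := congrArg Subtype.val h
    simp only [Ico01pt] at this
    linarith [hr n]
  · have := (tendsto_pow_atTop_nhds_zero_of_lt_one (by norm_num) (by norm_num : (2:ℝ)⁻¹ < 1)).comp
      (tendsto_add_atTop_nat 1)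
    simpa [comp_def] using tendsto_const_nhds.sub this

theorem Smash.not_isCountablyGenerated_nhds_pt_Ico01pt {Y : Type*} [TopologicalSpace Y]
    [T1Space Y] (y₀ : Y) [(𝓝[≠] y₀).NeBot] :
    ¬ (𝓝 (Smash.pt Ico01pt y₀)).IsCountablyGenerated :=
  let ⟨_, hax, ha⟩ := exists_locallyFinite_singleton_seq_Ico
  Smash.not_isCountablyGenerated_nhds_pt hax ha

/-- For `X = Y = [0,1)` pointed at `0`: the smash product `X ∧ Y` is not first countable
at its basepoint; consequently it cannot be embedded into any first-countable space.
In particular `[0,1) ∧ [0,1]` does not embed into `[0,1] ∧ [0,1]`, so `− ∧ [0,1]` does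
not preserve subspace embeddings. -/
theorem smash_Ico_not_firstCountable_at_pt :
    (¬ (𝓝 (Smash.pt Ico01pt Ico01pt)).IsCountablyGenerated) ∧
    (∀ (Z : Type) (_ : TopologicalSpace Z), FirstCountableTopology Z →
      ∀ f : Smash Ico01pt Ico01pt → Z, ¬ IsEmbedding f) ∧
    (∀ f : Smash Ico01pt Icc01pt → Smash Icc01pt Icc01pt, ¬ IsEmbedding f) :=
  ⟨Smash.not_isCountablyGenerated_nhds_pt_Ico01pt Ico01pt,
    fun _ _ _ _ hf => Smash.not_isCountablyGenerated_nhds_pt_Ico01pt Ico01pt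
      (hf.firstCountableTopology.nhds_generated_countable _),
    fun _ hf => Smash.not_isCountablyGenerated_nhds_pt_Ico01pt Icc01pt
      (hf.firstCountableTopology.nhds_generated_countable _)⟩
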